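/- Let x > 0, β > 0, v ∈ ℝ^N with y = x + βv > 0 componentwise, and set z = P(y). Let ρ > 0, let w ∈ ℝ^N be nonnegative, put S^- = {j : v_j < 0}, S^+ = {j : v_j > 0}, B^- = max{ρ + ∑_{j ∈ S^-} z_j, ∑_{j ∈ S^-} w_j} and B^+ = min{∑_{j ∈ S^+} z_j, ∑_{j ∈ S^+} w_j} (with max_{j ∈ S^-}(−v_j/y_j) and min_{j ∈ S^+}(v_j/y_j) interpreted as 0 when the corresponding set is empty). If the decreasing condition β · max_{j ∈ S^-}(−v_j/y_j) · B^- − β · min_{j ∈ S^+}(v_j/y_j) · B^+ + β ∑_{j=1}^N v_j < I_A^b(y) − I_A^b(z) holds, then I_A^b(z) ≤ I_A^b(x). -/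

import Mathlib

open Finset Filter Topology

noncomputable def dd {M N : ℕ} (A : Fin M → Fin N → ℝ) (x : Fin N → ℝ) (i : Fin M) : ℝ :=
  ∑ j, A i j * x j

noncomputable def ff {M N : ℕ} (A : Fin M → Fin N → ℝ) (b : Fin M → ℝ) (x : Fin N → ℝ) (j : Fin N) : ℝ :=
  ∑ i, A i j * b i / dd A x i

noncomputable def EMop {M N : ℕ} (A : Fin M → Fin N → ℝ) (b : Fin M → ℝ) (x : Fin N → ℝ) : Fin N → ℝ :=
  fun j => x j * ff A b x j

noncomputable def KL {N : ℕ} (u v : Fin N → ℝ) : ℝ :=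
  (∑ j, u j * Real.log (u j / v j)) - ∑ j, (u j - v j)

noncomputable def IAb {M N : ℕ} (A : Fin M → Fin N → ℝ) (b : Fin M → ℝ) (x : Fin N → ℝ) : ℝ :=
  (∑ i, b i * Real.log (b i / dd A x i)) - ∑ i, (b i - dd A x i)

noncomputable def finSup0 {ι : Type*} (s : Finset ι) (g : ι → ℝ) : ℝ :=
  if h : s.Nonempty then s.sup' h g else 0

noncomputable def finInf0 {ι : Type*} (s : Finset ι) (g : ι → ℝ) : ℝ :=
  if h : s.Nonempty then s.inf' h g else 0

/-!
As a function of `d = A x`, `IAb` is convex with gradient `1 - bᵢ / dᵢ`. The tangent inequality at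
`y = x + β v`, together with the column sums being one and `vⱼ fⱼ(y) = (vⱼ / yⱼ) zⱼ`, gives
`I(y) - I(x) ≤ β (∑ vⱼ - ∑ (vⱼ / yⱼ) zⱼ)`. Splitting the last sum by the sign of `vⱼ`, the ratios
`vⱼ / yⱼ` are at least their minimum on `S⁺`, where `∑ zⱼ ≥ B⁺`, and `-vⱼ / yⱼ` at most its maximum
on `S⁻`, where `∑ zⱼ ≤ B⁻`. So `I(y) - I(x)` is bounded by the left side of the decreasing
condition, which is below `I(y) - I(z)`.
-/

section SignSplit

variable {ι : Type*}

theorem sum_eq_sum_filter_pos_add_sum_filter_neg [Fintype ι] (v f : ι → ℝ)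
    (hf : ∀ j, v j = 0 → f j = 0) :
    ∑ j, f j = ∑ j ∈ univ.filter (fun j => 0 < v j), f j
      + ∑ j ∈ univ.filter (fun j => v j < 0), f j := by
  rw [← sum_filter_add_sum_filter_not univ (fun j => 0 < v j)]
  congr 1
  refine (sum_subset (fun j hj => ?_) fun j hj hj' => hf j ?_).symm <;>
    simp only [mem_filter, mem_univ, true_and, not_lt] at *
  · exact hj.le
  · exact le_antisymm hj hj'

theorem sum_mul_le_finSup0_mul {s : Finset ι} {g z : ι → ℝ} {B : ℝ}
    (hg : ∀ j ∈ s, 0 ≤ g j) (hz : ∀ j ∈ s, 0 ≤ z j) (hB : ∑ j ∈ s, z j ≤ B) :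
    ∑ j ∈ s, g j * z j ≤ finSup0 s g * B := by
  rcases s.eq_empty_or_nonempty with rfl | hs
  · simp [finSup0]
  obtain ⟨j₀, hj₀⟩ := hs
  have hsup : 0 ≤ s.sup' ⟨j₀, hj₀⟩ g := (hg j₀ hj₀).trans (le_sup' g hj₀)
  rw [finSup0, dif_pos ⟨j₀, hj₀⟩]
  calc ∑ j ∈ s, g j * z j ≤ ∑ j ∈ s, s.sup' ⟨j₀, hj₀⟩ g * z j :=
        sum_le_sum fun j hj => mul_le_mul_of_nonneg_right (le_sup' g hj) (hz j hj)
    _ = s.sup' ⟨j₀, hj₀⟩ g * ∑ j ∈ s, z j := (mul_sum ..).symm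
    _ ≤ s.sup' ⟨j₀, hj₀⟩ g * B := mul_le_mul_of_nonneg_left hB hsup

theorem finInf0_mul_le_sum_mul {s : Finset ι} {g z : ι → ℝ} {B : ℝ}
    (hg : ∀ j ∈ s, 0 ≤ g j) (hz : ∀ j ∈ s, 0 ≤ z j) (hB : B ≤ ∑ j ∈ s, z j) :
    finInf0 s g * B ≤ ∑ j ∈ s, g j * z j := by
  rcases s.eq_empty_or_nonempty with rfl | hs
  · simp [finInf0]
  rw [finInf0, dif_pos hs]
  calc s.inf' hs g * B ≤ s.inf' hs g * ∑ j ∈ s, z j :=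
        mul_le_mul_of_nonneg_left hB (le_inf' hs g hg)
    _ = ∑ j ∈ s, s.inf' hs g * z j := mul_sum ..
    _ ≤ ∑ j ∈ s, g j * z j :=
        sum_le_sum fun j hj => mul_le_mul_of_nonneg_right (inf'_le g hj) (hz j hj)

theorem finInf0_mul_sub_finSup0_mul_le [Fintype ι] {v y z : ι → ℝ} {Bp Bm : ℝ}
    (hy : ∀ j, 0 ≤ y j) (hz : ∀ j, 0 ≤ z j)
    (hBp : Bp ≤ ∑ j ∈ univ.filter (fun j => 0 < v j), z j)
    (hBm : ∑ j ∈ univ.filter (fun j => v j < 0), z j ≤ Bm) :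
    finInf0 (univ.filter (fun j => 0 < v j)) (fun j => v j / y j) * Bp
      - finSup0 (univ.filter (fun j => v j < 0)) (fun j => -v j / y j) * Bm
      ≤ ∑ j, v j / y j * z j := by
  have hpos := finInf0_mul_le_sum_mul (g := fun j => v j / y j)
    (fun j hj => div_nonneg (by simpa using (mem_filter.1 hj).2.le) (hy j)) (fun j _ => hz j) hBp
  have hneg := sum_mul_le_finSup0_mul (g := fun j => -v j / y j)
    (fun j hj => div_nonneg (by simpa using (mem_filter.1 hj).2.le) (hy j)) (fun j _ => hz j) hBm
  have hflip : ∑ j ∈ univ.filter (fun j => v j < 0), -v j / y j * z j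
      = -∑ j ∈ univ.filter (fun j => v j < 0), v j / y j * z j := by
    simp only [neg_div, neg_mul, sum_neg_distrib]
  rw [sum_eq_sum_filter_pos_add_sum_filter_neg v _ fun j hj => by simp [hj]]
  linarith

end SignSplit

section EM

variable {M N : ℕ} {A : Fin M → Fin N → ℝ} {b : Fin M → ℝ}

theorem dd_pos (hA : ∀ i j, 0 ≤ A i j) (hrow : ∀ i, ∃ j, 0 < A i j) {u : Fin N → ℝ}
    (hu : ∀ j, 0 < u j) (i : Fin M) : 0 < dd A u i := by
  obtain ⟨j, hj⟩ := hrow i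
  exact sum_pos' (fun k _ => mul_nonneg (hA i k) (hu k).le) ⟨j, mem_univ j, mul_pos hj (hu j)⟩

theorem dd_add_smul (A : Fin M → Fin N → ℝ) (x v : Fin N → ℝ) (β : ℝ) (i : Fin M) :
    dd A (x + β • v) i = dd A x i + β * dd A v i := by
  simp only [dd, Pi.add_apply, Pi.smul_apply, smul_eq_mul, mul_add, sum_add_distrib, mul_sum]
  congr 1
  exact sum_congr rfl fun j _ => by ring

theorem sum_dd (hcol : ∀ j, ∑ i, A i j = 1) (v : Fin N → ℝ) : ∑ i, dd A v i = ∑ j, v j := by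
  simp only [dd]
  rw [sum_comm]
  simp only [← sum_mul, hcol, one_mul]

theorem EMop_nonneg (hA : ∀ i j, 0 ≤ A i j) (hb : ∀ i, 0 ≤ b i) {y : Fin N → ℝ}
    (hy : ∀ j, 0 ≤ y j) (j : Fin N) : 0 ≤ EMop A b y j :=
  mul_nonneg (hy j) <| sum_nonneg fun i _ => div_nonneg (mul_nonneg (hA i j) (hb i))
    (sum_nonneg fun k _ => mul_nonneg (hA i k) (hy k))

theorem sum_dd_mul_one_sub_div (hcol : ∀ j, ∑ i, A i j = 1) (v : Fin N → ℝ) {y : Fin N → ℝ}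
    (hy : ∀ j, y j ≠ 0) :
    ∑ i, dd A v i * (1 - b i / dd A y i) = ∑ j, v j - ∑ j, v j / y j * EMop A b y j := by
  have hswap : ∑ i, dd A v i * (b i / dd A y i) = ∑ j, v j * ff A b y j := by
    simp only [dd, ff, sum_mul, mul_sum]
    rw [sum_comm]
    exact sum_congr rfl fun j _ => sum_congr rfl fun i _ => by ring
  simp only [mul_one_sub, sum_sub_distrib, hswap, sum_dd hcol, EMop]
  congr 1
  exact sum_congr rfl fun j _ => by field_simp [hy j]

theorem mul_log_div_sub_le {b d d' : ℝ} (hb : 0 < b) (hd : 0 < d) (hd' : 0 < d') :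
    (b * Real.log (b / d) - (b - d)) - (b * Real.log (b / d') - (b - d'))
      ≤ (d - d') * (1 - b / d) := by
  have hlog : Real.log (b / d) - Real.log (b / d') ≤ d' / d - 1 := by
    rw [← Real.log_div (by positivity) (by positivity)]
    convert Real.log_le_sub_one_of_pos (div_pos hd' hd) using 2
    field_simp
  have key : b * (Real.log (b / d) - Real.log (b / d')) ≤ b * (d' / d - 1) :=
    mul_le_mul_of_nonneg_left hlog hb.le
  have : b * (d' / d - 1) + (d - d') = (d - d') * (1 - b / d) := by field_simp; ring
  linarith

theorem IAb_sub_IAb_le (hb : ∀ i, 0 < b i) {x y : Fin N → ℝ} (hx : ∀ i, 0 < dd A x i)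
    (hy : ∀ i, 0 < dd A y i) :
    IAb A b y - IAb A b x ≤ ∑ i, (dd A y i - dd A x i) * (1 - b i / dd A y i) := by
  simp only [IAb, ← sum_sub_distrib]
  exact sum_le_sum fun i _ => mul_log_div_sub_le (hb i) (hy i) (hx i)

theorem IAb_sub_IAb_le_of_eq_add_smul (hA : ∀ i j, 0 ≤ A i j) (hcol : ∀ j, ∑ i, A i j = 1)
    (hrow : ∀ i, ∃ j, 0 < A i j) (hb : ∀ i, 0 < b i) {x v y : Fin N → ℝ} {β : ℝ}
    (hx : ∀ j, 0 < x j) (hy : ∀ j, 0 < y j) (hxy : y = x + β • v) :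
    IAb A b y - IAb A b x ≤ β * (∑ j, v j - ∑ j, v j / y j * EMop A b y j) := by
  have hdiff : ∀ i, dd A y i - dd A x i = β * dd A v i := fun i => by
    rw [hxy, dd_add_smul]; ring
  calc IAb A b y - IAb A b x ≤ ∑ i, (dd A y i - dd A x i) * (1 - b i / dd A y i) :=
        IAb_sub_IAb_le hb (dd_pos hA hrow hx) (dd_pos hA hrow hy)
    _ = β * ∑ i, dd A v i * (1 - b i / dd A y i) := by simp only [hdiff, mul_sum, mul_assoc]
    _ = β * (∑ j, v j - ∑ j, v j / y j * EMop A b y j) := by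
        rw [sum_dd_mul_one_sub_div hcol v fun j => (hy j).ne']

end EM

theorem stmt_6_general
    (M N : ℕ)
    (A : Fin M → Fin N → ℝ) (b : Fin M → ℝ)
    (hA : ∀ i j, 0 ≤ A i j)
    (hcol : ∀ j, ∑ i, A i j = 1)
    (hrow : ∀ i, ∃ j, 0 < A i j)
    (hb : ∀ i, 0 < b i)
    (x v : Fin N → ℝ) (β : ℝ)
    (hx : ∀ j, 0 < x j) (hβ : 0 < β)
    (y : Fin N → ℝ) (hy : y = fun j => x j + β * v j)
    (hypos : ∀ j, 0 < y j)
    (z : Fin N → ℝ) (hz : z = EMop A b y)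
    (ρ : ℝ) (hρ : 0 < ρ)
    (w : Fin N → ℝ)
    (Sm Sp : Finset (Fin N))
    (hSm : Sm = Finset.univ.filter (fun j => v j < 0))
    (hSp : Sp = Finset.univ.filter (fun j => 0 < v j))
    (Bm Bp : ℝ)
    (hBm : Bm = max (ρ + ∑ j ∈ Sm, z j) (∑ j ∈ Sm, w j))
    (hBp : Bp = min (∑ j ∈ Sp, z j) (∑ j ∈ Sp, w j))
    (hdec : β * finSup0 Sm (fun j => -v j / y j) * Bm
          - β * finInf0 Sp (fun j => v j / y j) * Bp
          + β * (∑ j, v j) < IAb A b y - IAb A b z) :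
    IAb A b z ≤ IAb A b x := by
  have hdesc := IAb_sub_IAb_le_of_eq_add_smul hA hcol hrow hb hx hypos (v := v) (β := β) hy
  have hz_nonneg : ∀ j, 0 ≤ z j := hz ▸ EMop_nonneg hA (fun i => (hb i).le) fun j => (hypos j).le
  have hsplit := finInf0_mul_sub_finSup0_mul_le (fun j => (hypos j).le) hz_nonneg
    (hSp ▸ hBp ▸ min_le_left _ _) (hSm ▸ hBm ▸ le_max_of_le_left (le_add_of_nonneg_left hρ.le))
  rw [← hSm, ← hSp] at hsplit
  rw [← hz] at hdesc
  have := mul_le_mul_of_nonneg_left hsplit hβ.le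
  linarith

theorem stmt_6
    (M N : ℕ) (hM : 0 < M) (hN : 0 < N)
    (A : Fin M → Fin N → ℝ) (b : Fin M → ℝ)
    (hA : ∀ i j, 0 ≤ A i j)
    (hcol : ∀ j, ∑ i, A i j = 1)
    (hrow : ∀ i, ∃ j, 0 < A i j)
    (hb : ∀ i, 0 < b i)
    (x v : Fin N → ℝ) (β : ℝ)
    (hx : ∀ j, 0 < x j) (hβ : 0 < β)
    (y : Fin N → ℝ) (hy : y = fun j => x j + β * v j)
    (hypos : ∀ j, 0 < y j)
    (z : Fin N → ℝ) (hz : z = EMop A b y)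
    (ρ : ℝ) (hρ : 0 < ρ)
    (w : Fin N → ℝ) (hw : ∀ j, 0 ≤ w j)
    (Sm Sp : Finset (Fin N))
    (hSm : Sm = Finset.univ.filter (fun j => v j < 0))
    (hSp : Sp = Finset.univ.filter (fun j => 0 < v j))
    (Bm Bp : ℝ)
    (hBm : Bm = max (ρ + ∑ j ∈ Sm, z j) (∑ j ∈ Sm, w j))
    (hBp : Bp = min (∑ j ∈ Sp, z j) (∑ j ∈ Sp, w j))
    (hdec : β * finSup0 Sm (fun j => -v j / y j) * Bm
          - β * finInf0 Sp (fun j => v j / y j) * Bp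
          + β * (∑ j, v j) < IAb A b y - IAb A b z) :
    IAb A b z ≤ IAb A b x :=
  stmt_6_general M N A b hA hcol hrow hb x v β hx hβ y hy hypos z hz ρ hρ w Sm Sp hSm hSp Bm Bp hBm
    hBp hdec
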